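/- The semigroup Q'_n is right ample: for every α ∈ Q'_n and every idempotent ε ∈ Q'_n, one has αε = ε_{dom(αε)}·α, where ε_{dom(αε)} denotes the partial identity with domain dom(αε), which lies in Q'_n. -/

import Mathlib

open scoped Classical

namespace ICCatalan

/-- Partial injective transformations on `Fin n` (representing the chain `[n] = {1,…,n}`). -/
abbrev PT (n : ℕ) := Fin n ≃. Fin n

/-- Composition (left-to-right, `x(αβ) = (xα)β`) makes `PT n` a monoid. -/
noncomputable instance instMonoidPT (n : ℕ) : Monoid (PT n) where
  mul f g := f.trans g
  one := PEquiv.refl (Fin n)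
  mul_assoc := PEquiv.trans_assoc
  one_mul := PEquiv.refl_trans
  mul_one := PEquiv.trans_refl

lemma mul_def {n : ℕ} (f g : PT n) : f * g = f.trans g := rfl

/-- The domain of a partial transformation. -/
def pdom {n : ℕ} (f : PT n) : Set (Fin n) := {x | ∃ y, f x = some y}

/-- The image of a partial transformation. -/
def pim {n : ℕ} (f : PT n) : Set (Fin n) := {y | ∃ x, f x = some y}

/-- The height `|im f|` of a partial transformation. -/
noncomputable def height {n : ℕ} (f : PT n) : ℕ := (pim f).ncard

/-- `f` is order-decreasing: `xf ≤ x` on the domain. -/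
def IsDecr {n : ℕ} (f : PT n) : Prop := ∀ x y : Fin n, f x = some y → y ≤ x

/-- `f` is isotone: `x ≤ y` implies `xf ≤ yf` on the domain. -/
def IsIso {n : ℕ} (f : PT n) : Prop :=
  ∀ x₁ x₂ y₁ y₂ : Fin n, f x₁ = some y₁ → f x₂ = some y₂ → x₁ ≤ x₂ → y₁ ≤ y₂

/-- The injective partial Catalan monoid `IC_n`: all isotone order-decreasing
partial injective transformations of `[n]`. -/
def IC (n : ℕ) : Set (PT n) := {f | IsIso f ∧ IsDecr f}

/-- `Q'_n = {α ∈ IC_n : 1 ∉ dom α}` (the least element of `Fin n` plays the role of `1 ∈ [n]`). -/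
def Qp (n : ℕ) : Set (PT n) := {f | f ∈ IC n ∧ ∀ x : Fin n, (x : ℕ) = 0 → f x = none}

/-- `S¹ : S` with an identity adjoined (realized inside `PT n`). -/
def SOne {n : ℕ} (S : Set (PT n)) : Set (PT n) := S ∪ {1}

/-- The starred Green relation `L*` of the subsemigroup `S`. -/
def LStar {n : ℕ} (S : Set (PT n)) (a b : PT n) : Prop :=
  ∀ x ∈ SOne S, ∀ y ∈ SOne S, (a * x = a * y ↔ b * x = b * y)

/-- The starred Green relation `R*` of the subsemigroup `S`. -/
def RStar {n : ℕ} (S : Set (PT n)) (a b : PT n) : Prop :=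
  ∀ x ∈ SOne S, ∀ y ∈ SOne S, (x * a = y * a ↔ x * b = y * b)

/-- The starred Green relation `H* = L* ∩ R*`. -/
def HStar {n : ℕ} (S : Set (PT n)) (a b : PT n) : Prop :=
  LStar S a b ∧ RStar S a b

/-- The partial identity on a subset `A` of `[n]`. -/
noncomputable def pid {n : ℕ} (A : Set (Fin n)) : PT n := PEquiv.ofSet A

/-- An essential element: exactly one point `y` of the domain is moved, and `yf = y - 1`. -/
def IsEssential {n : ℕ} (f : PT n) : Prop :=
  ∃ y z : Fin n, f y = some z ∧ (z : ℕ) + 1 = (y : ℕ) ∧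
    ∀ x w : Fin n, f x = some w → w ≠ x → x = y

/-- The shift of `f`: the number of non-fixed points of its domain. -/
noncomputable def shift {n : ℕ} (f : PT n) : ℕ := {x : Fin n | ∃ w, f x = some w ∧ w ≠ x}.ncard


/-!
An idempotent partial injection is a partial identity, so right multiplication by it only
restricts the domain; the same restriction is achieved on the left by the partial identity on
`dom (αε)`. That set lies inside `dom α`, which avoids the least point, so this partial identity
is in `Q'_n`.
-/

section

variable {n : ℕ}

theorem pid_apply (A : Set (Fin n)) (x : Fin n) :
    pid A x = if x ∈ A then some x else none := rfl

theorem mul_apply (f g : PT n) (x : Fin n) : (f * g) x = (f x).bind g := rfl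

theorem pid_mem_IC (A : Set (Fin n)) : pid A ∈ IC n := by
  constructor
  · intro x₁ x₂ y₁ y₂ h₁ h₂ hle
    rw [pid, PEquiv.ofSet_eq_some_iff] at h₁ h₂
    rwa [h₁.1, h₂.1]
  · intro x y h
    rw [pid, PEquiv.ofSet_eq_some_iff] at h
    exact h.1.le

theorem pid_mem_Qp {A : Set (Fin n)} (hA : ∀ x ∈ A, (x : ℕ) ≠ 0) : pid A ∈ Qp n :=
  ⟨pid_mem_IC A, fun x hx => if_neg fun h => hA x h hx⟩

theorem pdom_mul_subset (f g : PT n) : pdom (f * g) ⊆ pdom f := by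
  rintro x ⟨z, hz⟩
  obtain ⟨y, hy, -⟩ := (PEquiv.trans_eq_some f g x z).1 hz
  exact ⟨y, hy⟩

theorem eq_of_isIdempotentElem {e : PT n} (he : IsIdempotentElem e) {x y : Fin n}
    (hxy : e x = some y) : y = x := by
  have hyy : e y = some y := by
    obtain ⟨z, hxz, hzy⟩ := (PEquiv.trans_eq_some e e x y).1 (by rw [← mul_def, he.eq]; exact hxy)
    rwa [Option.some.inj (hxz.symm.trans hxy)] at hzy
  exact (e.inj hxy hyy).symm

theorem mul_eq_pid_pdom_mul (f : PT n) {e : PT n} (he : ∀ x y, e x = some y → y = x) :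
    f * e = pid (pdom (f * e)) * f := by
  ext x : 1
  rw [mul_apply, mul_apply, pid_apply]
  split_ifs with hx
  · obtain ⟨z, hz⟩ := hx
    obtain ⟨y, hy, hyz⟩ := (PEquiv.trans_eq_some f e x z).1 hz
    obtain rfl := he y z hyz
    simp [hy, hyz]
  · simpa [pdom, mul_apply, Option.eq_none_iff_forall_ne_some] using hx

end

theorem stmt7_general (n : ℕ) :
    ∀ α ∈ Qp n, ∀ ε ∈ Qp n, ε * ε = ε →
      α * ε = pid (pdom (α * ε)) * α ∧ pid (pdom (α * ε)) ∈ Qp n := by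
  intro α hα ε _ hε
  refine ⟨mul_eq_pid_pdom_mul α fun x y => eq_of_isIdempotentElem hε, pid_mem_Qp ?_⟩
  rintro x hx hx0
  obtain ⟨y, hy⟩ := pdom_mul_subset α ε hx
  simp [hα.2 x hx0] at hy

/-- `Q'_n` is right ample: for every `α ∈ Q'_n` and every idempotent
`ε ∈ Q'_n`, one has `αε = ε_{dom(αε)}·α`, and the partial identity `ε_{dom(αε)}`
lies in `Q'_n`. -/
theorem stmt7 (n : ℕ) (hn : 0 < n) :
    ∀ α ∈ Qp n, ∀ ε ∈ Qp n, ε * ε = ε →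
      α * ε = pid (pdom (α * ε)) * α ∧ pid (pdom (α * ε)) ∈ Qp n :=
  stmt7_general n

end ICCatalan
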